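/- arXiv:2103.17130 — 2 statements merged into one kernel-verified Lean document; each statement's English description precedes it below -/
import Mathlib

section
/- With notation as above (ν : X̃ → X a normalization, ρ a lift of φ with ρ bijective), let k = max over x ∈ X of n(x), and let X_k = { x ∈ X : n(x) = k }. Then φ(X_k) ⊆ X_k, and the restriction of φ to X_k is injective whenever φ restricted to X \ Y is injective for a proper closed subvariety Y. -/
/-!
Since `ν ∘ ρ = φ ∘ ν` and `ρ` is injective, `ρ` maps the fibre of `ν` over `x` injectively into
the fibre over `φ x`, so fibre cardinalities never drop along `φ`; this keeps the stratum of
maximal cardinality `m` invariant. If two distinct points of that stratum had the same image,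
the two disjoint fibres would inject into a single fibre, which would then have `2m > m` points.
-/

open AlgebraicGeometry CategoryTheory Function Set

namespace Function.Semiconj

variable {A B : Type*} {ν : A → B} {ρ : A → A} {φ : B → B}

theorem ncard_preimage_le_ncard_preimage_image (h : Semiconj ν ρ φ) (hρ : Injective ρ)
    {s : Set B} (hfin : (ν ⁻¹' (φ '' s)).Finite) :
    (ν ⁻¹' s).ncard ≤ (ν ⁻¹' (φ '' s)).ncard :=
  ncard_le_ncard_of_injOn ρ
    (fun a ha => show ν (ρ a) ∈ φ '' s from h a ▸ mem_image_of_mem φ ha) hρ.injOn hfin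

theorem ncard_fiber_le_ncard_fiber_apply (h : Semiconj ν ρ φ) (hρ : Injective ρ) (x : B)
    (hfin : (ν ⁻¹' {φ x}).Finite) : (ν ⁻¹' {x}).ncard ≤ (ν ⁻¹' {φ x}).ncard := by
  rw [← image_singleton] at hfin ⊢
  exact h.ncard_preimage_le_ncard_preimage_image hρ hfin

theorem ncard_fiber_add_ncard_fiber_le (h : Semiconj ν ρ φ) (hρ : Injective ρ)
    (hfin : ∀ y, (ν ⁻¹' {y}).Finite) {x₁ x₂ : B} (hne : x₁ ≠ x₂) (heq : φ x₁ = φ x₂) :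
    (ν ⁻¹' {x₁}).ncard + (ν ⁻¹' {x₂}).ncard ≤ (ν ⁻¹' {φ x₁}).ncard := by
  have himage : φ '' {x₁, x₂} = {φ x₁} := by rw [image_pair, heq, pair_eq_singleton]
  have hdisj : Disjoint (ν ⁻¹' {x₁}) (ν ⁻¹' {x₂}) :=
    (disjoint_singleton.2 hne).preimage ν
  calc (ν ⁻¹' {x₁}).ncard + (ν ⁻¹' {x₂}).ncard
      = (ν ⁻¹' {x₁, x₂}).ncard := by
        rw [insert_eq, preimage_union, ncard_union_eq hdisj (hfin x₁) (hfin x₂)]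
    _ ≤ (ν ⁻¹' {φ x₁}).ncard := by
        simpa only [himage] using
          h.ncard_preimage_le_ncard_preimage_image hρ (s := {x₁, x₂}) (himage ▸ hfin _)

variable {m : ℕ}

theorem mapsTo_ncard_fiber_eq_max (h : Semiconj ν ρ φ) (hρ : Injective ρ)
    (hfin : ∀ y, (ν ⁻¹' {y}).Finite) (hm : IsGreatest (range fun x => (ν ⁻¹' {x}).ncard) m) :
    MapsTo φ {x | (ν ⁻¹' {x}).ncard = m} {x | (ν ⁻¹' {x}).ncard = m} := fun x hx =>
  le_antisymm (hm.2 ⟨φ x, rfl⟩) (hx ▸ h.ncard_fiber_le_ncard_fiber_apply hρ x (hfin _))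

theorem injOn_ncard_fiber_eq_max (h : Semiconj ν ρ φ) (hρ : Injective ρ)
    (hν : Surjective ν) (hfin : ∀ y, (ν ⁻¹' {y}).Finite)
    (hm : IsGreatest (range fun x => (ν ⁻¹' {x}).ncard) m) :
    InjOn φ {x | (ν ⁻¹' {x}).ncard = m} := by
  intro x₁ (hx₁ : _ = m) x₂ (hx₂ : _ = m) heq
  by_contra hne
  have htwice : m + m ≤ m := by
    simpa only [hx₁, hx₂] using
      (h.ncard_fiber_add_ncard_fiber_le hρ hfin hne heq).trans (hm.2 ⟨φ x₁, rfl⟩)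
  have hpos : 0 < (ν ⁻¹' {x₁}).ncard := (ncard_pos (hfin x₁)).2 (hν x₁)
  omega

end Function.Semiconj

theorem normalization_max_fiber_stratum_invariant_and_injective_general
    (X Xt : Scheme)
    (ν : Xt ⟶ X) [IsFinite ν] (hνsurj : Function.Surjective ν.base)
    (φ : X ⟶ X)
    (ρ : Xt ⟶ Xt) (hcomm : ρ ≫ ν = ν ≫ φ)
    (hρ : Function.Bijective ρ.base)
    (m : ℕ) (hm : IsGreatest (Set.range fun x : X => (ν.base ⁻¹' {x}).ncard) m)
    (Xm : Set X) (hXm : Xm = {x : X | (ν.base ⁻¹' {x}).ncard = m}) :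
    φ.base '' Xm ⊆ Xm ∧ Set.InjOn φ.base Xm := by
  subst hXm
  have hsemiconj : Semiconj ν.base ρ.base φ.base := fun t => by
    rw [← Scheme.Hom.comp_apply, hcomm, Scheme.Hom.comp_apply]
  have hfin : ∀ x : X, (ν.base ⁻¹' {x}).Finite := ν.finite_preimage_singleton
  exact ⟨(hsemiconj.mapsTo_ncard_fiber_eq_max hρ.1 hfin hm).image_subset,
    hsemiconj.injOn_ncard_fiber_eq_max hρ.1 hνsurj hfin hm⟩

/-- With `ν : X̃ → X` a normalization (finite surjective, `X̃` normal),
`ρ` a bijective lift of `φ` (`ν ∘ ρ = φ ∘ ν`), `m` the maximum of the fiber counts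
`n(x) = #ν⁻¹(x)` and `X_m = {x | n(x) = m}`, we have `φ(X_m) ⊆ X_m`, and `φ`
restricted to `X_m` is injective whenever `φ` restricted to the complement of a proper
closed subvariety `Y` is injective. -/
theorem normalization_max_fiber_stratum_invariant_and_injective
    (k : Type) [Field k] [IsAlgClosed k] [CharZero k]
    (X Xt : Scheme) [IsIntegral X] [IsIntegral Xt]
    (f : X ⟶ Spec (CommRingCat.of k)) [LocallyOfFiniteType f] [QuasiCompact f]
    [IsSeparated f]
    (hXtnormal : ∀ x : Xt, IsIntegrallyClosed (Xt.presheaf.stalk x))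
    (ν : Xt ⟶ X) [IsFinite ν] (hνsurj : Function.Surjective ν.base)
    (φ : X ⟶ X) (hφ : φ ≫ f = f)
    (ρ : Xt ⟶ Xt) (hcomm : ρ ≫ ν = ν ≫ φ)
    (hρ : Function.Bijective ρ.base)
    (m : ℕ) (hm : IsGreatest (Set.range fun x : X => (ν.base ⁻¹' {x}).ncard) m)
    (Xm : Set X) (hXm : Xm = {x : X | (ν.base ⁻¹' {x}).ncard = m})
    (Y : Set X) (hYcl : IsClosed Y) (hYirr : IsIrreducible Y) (hYne : Y ≠ Set.univ)
    (hinj : Set.InjOn φ.base Yᶜ) :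
    φ.base '' Xm ⊆ Xm ∧ Set.InjOn φ.base Xm :=
  normalization_max_fiber_stratum_invariant_and_injective_general X Xt ν hνsurj φ ρ hcomm hρ m hm Xm
    hXm
end

section
/- Let X be a topological space, U and V dense open subsets of X, and φ : X → X a continuous map whose restriction to U is a homeomorphism onto V. If X is Hausdorff and locally compact, then for every open set A ⊆ X, φ(A ∩ U) = φ(A) ∩ V. -/
/-! On the open set `W = φ⁻¹(V)` the maps `w ↦ w` and `w ↦ (φ|_U)⁻¹(φ w)` are continuous and agree on
the dense subset `W ∩ U`, so they agree on all of `W` because `X` is Hausdorff. Hence every point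
of `X` that `φ` sends into `V` already lies in `U`. -/

theorem Dense.mem_of_map_mem_of_homeomorph {X Y : Type*} [TopologicalSpace X] [TopologicalSpace Y]
    [T2Space X] {U : Set X} {V : Set Y} (hU : Dense U) (hV : IsOpen V) {φ : X → Y}
    (hφ : Continuous φ) (e : U ≃ₜ V) (he : ∀ x : U, (e x : Y) = φ x) {x : X} (hx : φ x ∈ V) :
    x ∈ U := by
  let W : Set X := φ ⁻¹' V
  let g : W → X := fun w => e.symm ⟨φ w, w.2⟩
  have hg : Continuous g := by fun_prop
  have hdense : Dense ((↑) ⁻¹' U : Set W) := hU.preimage (hV.preimage hφ).isOpenMap_subtype_val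
  have hg_eq : g = (↑) := by
    refine hg.ext_on hdense continuous_subtype_val fun w hw => ?_
    have : e ⟨w, hw⟩ = ⟨φ w, w.2⟩ := Subtype.ext (he ⟨w, hw⟩)
    simp only [g, ← this, Homeomorph.symm_apply_apply]
  have : g ⟨x, hx⟩ = x := congrFun hg_eq ⟨x, hx⟩
  exact this ▸ (e.symm _).2

theorem image_inter_dense_open_eq_general
    {X : Type*} [TopologicalSpace X] [T2Space X]
    (U V : Set X) (hVo : IsOpen V) (hUd : Dense U)
    (φ : X → X) (hφc : Continuous φ)
    (hhomeo : ∃ e : U ≃ₜ V, ∀ x : U, (e x : X) = φ x)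
    (A : Set X) :
    φ '' (A ∩ U) = φ '' A ∩ V := by
  obtain ⟨e, he⟩ := hhomeo
  ext y
  constructor
  · rintro ⟨x, ⟨hxA, hxU⟩, rfl⟩
    exact ⟨⟨x, hxA, rfl⟩, he ⟨x, hxU⟩ ▸ (e ⟨x, hxU⟩).2⟩
  · rintro ⟨⟨x, hxA, rfl⟩, hxV⟩
    exact ⟨x, ⟨hxA, hUd.mem_of_map_mem_of_homeomorph hVo hφc e he hxV⟩, rfl⟩

/-- Let `X` be a Hausdorff locally compact space, `U`, `V` dense open
subsets, and `φ : X → X` continuous with `φ(U) = V` and restricting to a homeomorphism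
from `U` onto `V`. Then for every open `A ⊆ X`, `φ(A ∩ U) = φ(A) ∩ V`. -/
theorem image_inter_dense_open_eq
    {X : Type*} [TopologicalSpace X] [T2Space X] [LocallyCompactSpace X]
    (U V : Set X) (hUo : IsOpen U) (hVo : IsOpen V) (hUd : Dense U) (hVd : Dense V)
    (φ : X → X) (hφc : Continuous φ) (hUV : φ '' U = V)
    (hhomeo : ∃ e : U ≃ₜ V, ∀ x : U, (e x : X) = φ x)
    (A : Set X) (hA : IsOpen A) :
    φ '' (A ∩ U) = φ '' A ∩ V :=
  image_inter_dense_open_eq_general U V hVo hUd φ hφc hhomeo A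
end
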